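/- Let R be a Noetherian commutative ring and M an R-module, and let (M_i)_{i∈I} be the directed family of finitely generated submodules of M. Then M is flat if and only if for every R-module N the natural map colim_i Hom_R(M_i*, N) → M ⊗_R N is an isomorphism, where the maps Hom_R(M_i*, N) → M ⊗_R N are induced by the natural pairings. -/

import Mathlib

/-!
Both sides are directed colimits over the finitely generated submodules `M i`, since
`M ⊗ N = colim (M i ⊗ N)`, and the comparison map is the colimit of the pairings
`M i ⊗ N → Hom((M i)*, N)`, which are bijective when `M i` is finite projective.

If `M` is flat, each `M i` is finitely presented (`R` is Noetherian), so its inclusion into `M`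
factors through a finite free module `F`, and `F → M` lands in some larger `M j`. Thus each
transition map `M i → M j` factors through a module on which the pairing is bijective, and this
makes the colimit map bijective. Conversely, if the comparison maps are isomorphisms, then for
injective `N → N'` the map `M ⊗ N → M ⊗ N'` is identified with the postcomposition map
`colim Hom((M i)*, N) → colim Hom((M i)*, N')`, and directed colimits preserve injectivity.
-/

universe u

open TensorProduct

section

variable (R : Type u) [CommRing R] (M : Type u) [AddCommGroup M] [Module R M]
  (N : Type u) [AddCommGroup N] [Module R N]

/-- The index set: finitely generated submodules of `M`, directed by inclusion. -/
abbrev FGSub := {P : Submodule R M // P.FG}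

/-- The directed system `i ↦ Hom((M i)*, N)` over the finitely generated submodules of `M`,
with transition maps given by precomposition with the restrictions `(M j)* → (M i)*`. -/
noncomputable def homDualSystem (i j : FGSub R M) (h : i ≤ j) :
    (Module.Dual R i.1 →ₗ[R] N) →ₗ[R] (Module.Dual R j.1 →ₗ[R] N) :=
  (LinearMap.llcomp R (Module.Dual R j.1) (Module.Dual R i.1) N).flip
    ((Submodule.inclusion h).dualMap)

namespace Module.DirectLimit

variable {A ι : Type*} [Ring A] [Preorder ι] [DecidableEq ι] [Nonempty ι] [IsDirectedOrder ι]
  {G G' : ι → Type*} [∀ i, AddCommGroup (G i)] [∀ i, Module A (G i)]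
  [∀ i, AddCommGroup (G' i)] [∀ i, Module A (G' i)]
  {f : ∀ i j, i ≤ j → G i →ₗ[A] G j} {f' : ∀ i j, i ≤ j → G' i →ₗ[A] G' j}
  (g : ∀ i, G i →ₗ[A] G' i) (hg : ∀ i j h, g j ∘ₗ f i j h = f' i j h ∘ₗ g i)

theorem map_injective_of [DirectedSystem G' (f' · · ·)]
    (hker : ∀ i x, g i x = 0 → ∃ j h, f i j h x = 0) : Function.Injective (map g hg) := by
  refine (injective_iff_map_eq_zero _).mpr fun z hz => ?_
  induction z using DirectLimit.induction_on with | _ i x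
  rw [map_apply_of] at hz
  obtain ⟨j, hij, hj⟩ := of.zero_exact hz
  rw [← LinearMap.comp_apply, ← hg] at hj
  obtain ⟨k, hjk, hk⟩ := hker j _ hj
  rw [← of_f (hij := hij), ← of_f (hij := hjk), hk, map_zero]

theorem map_injective [DirectedSystem G (f · · ·)] [DirectedSystem G' (f' · · ·)]
    (hinj : ∀ i, Function.Injective (g i)) : Function.Injective (map g hg) :=
  map_injective_of g hg fun i x hx =>
    ⟨i, le_rfl, by
      rw [DirectedSystem.map_self' f, (injective_iff_map_eq_zero _).mp (hinj i) x hx]⟩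

theorem map_surjective_of (hrange : ∀ i y, ∃ j h x, g j x = f' i j h y) :
    Function.Surjective (map g hg) := by
  intro z
  induction z using DirectLimit.induction_on with | _ i y
  obtain ⟨j, hij, x, hx⟩ := hrange i y
  exact ⟨of _ _ _ _ j x, by rw [map_apply_of, hx, of_f]⟩

end Module.DirectLimit

section EvalTensorHom

variable (R : Type*) [CommSemiring R] (P Q N N' : Type*) [AddCommMonoid P] [Module R P]
  [AddCommMonoid Q] [Module R Q] [AddCommMonoid N] [Module R N] [AddCommMonoid N'] [Module R N']

noncomputable def evalTensorHom : P ⊗[R] N →ₗ[R] (Module.Dual R P →ₗ[R] N) :=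
  dualTensorHom R (Module.Dual R P) N ∘ₗ (Module.Dual.eval R P).rTensor N

variable {R P Q N N'}

@[simp] theorem evalTensorHom_tmul (p : P) (n : N) :
    evalTensorHom R P N (p ⊗ₜ n) = (Module.Dual.eval R P p).smulRight n := rfl

theorem evalTensorHom_rTensor (c : P →ₗ[R] Q) (x : P ⊗[R] N) :
    evalTensorHom R Q N (c.rTensor N x) = evalTensorHom R P N x ∘ₗ c.dualMap := by
  induction x using TensorProduct.induction_on with
  | zero => simp
  | tmul p n => ext w; simp
  | add x y hx hy => simp only [map_add, hx, hy, LinearMap.add_comp]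

theorem evalTensorHom_lTensor (g : N →ₗ[R] N') (x : P ⊗[R] N) :
    evalTensorHom R P N' (g.lTensor P x) = g ∘ₗ evalTensorHom R P N x := by
  induction x using TensorProduct.induction_on with
  | zero => simp
  | tmul p n => ext w; simp
  | add x y hx hy => simp only [map_add, hx, hy, LinearMap.comp_add]

theorem evalTensorHom_bijective [Module.Finite R P] [Module.Projective R P] :
    Function.Bijective (evalTensorHom R P N) :=
  dualTensorHom_bijective.comp (LinearEquiv.rTensor N (Module.evalEquiv R P)).bijective

end EvalTensorHom

theorem homDualSystem_apply (i j : FGSub R M) (h : i ≤ j) (φ : Module.Dual R i.1 →ₗ[R] N) :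
    homDualSystem R M N i j h φ = φ ∘ₗ (Submodule.inclusion h).dualMap := rfl

instance : DirectedSystem (fun i : FGSub R M => Module.Dual R i.1 →ₗ[R] N)
    (homDualSystem R M N · · ·) where
  map_self _ _ := rfl
  map_map _ _ _ _ _ _ := rfl

variable {R M N}

theorem exists_inclusion_factorization_of_flat [IsNoetherianRing R] [Module.Flat R M]
    (i : FGSub R M) :
    ∃ (j : FGSub R M) (h : i ≤ j) (k : ℕ) (a : i.1 →ₗ[R] (Fin k →₀ R))
      (b : (Fin k →₀ R) →ₗ[R] j.1), b ∘ₗ a = Submodule.inclusion h := by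
  have : Module.Finite R i.1 := Module.Finite.iff_fg.mpr i.2
  have := Module.finitePresentation_of_finite R i.1
  obtain ⟨k, a, b, hab⟩ := Module.Flat.exists_factorization_of_finitePresentation i.1.subtype
  have hb : (LinearMap.range b).FG := by
    rw [LinearMap.range_eq_map]; exact Module.Finite.fg_top.map b
  let j : FGSub R M := ⟨i.1 ⊔ LinearMap.range b, i.2.sup hb⟩
  refine ⟨j, le_sup_left (a := i.1), k, a,
    b.codRestrict j.1 fun x => Submodule.mem_sup_right (LinearMap.mem_range_self b x), ?_⟩
  ext p
  exact congr($hab.symm p)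

theorem exists_rTensor_inclusion_eq_zero [IsNoetherianRing R] [Module.Flat R M]
    {i : FGSub R M} {x : i.1 ⊗[R] N} (hx : evalTensorHom R i.1 N x = 0) :
    ∃ (j : FGSub R M) (h : i ≤ j), (Submodule.inclusion h).rTensor N x = 0 := by
  obtain ⟨j, h, k, a, b, hab⟩ := exists_inclusion_factorization_of_flat i
  have hax : a.rTensor N x = 0 := evalTensorHom_bijective.injective <| by
    rw [evalTensorHom_rTensor, hx, LinearMap.zero_comp, map_zero]
  exact ⟨j, h, by rw [← hab, LinearMap.rTensor_comp_apply, hax, map_zero]⟩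

theorem exists_evalTensorHom_eq_homDualSystem [IsNoetherianRing R] [Module.Flat R M]
    (i : FGSub R M) (φ : Module.Dual R i.1 →ₗ[R] N) :
    ∃ (j : FGSub R M) (h : i ≤ j) (x : j.1 ⊗[R] N),
      evalTensorHom R j.1 N x = homDualSystem R M N i j h φ := by
  obtain ⟨j, h, k, a, b, hab⟩ := exists_inclusion_factorization_of_flat i
  obtain ⟨t, ht⟩ := evalTensorHom_bijective.surjective (φ ∘ₗ a.dualMap)
  refine ⟨j, h, b.rTensor N t, ?_⟩
  rw [evalTensorHom_rTensor, ht, LinearMap.comp_assoc, LinearMap.dualMap_comp_dualMap, hab,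
    homDualSystem_apply]

variable (R M N)

section

variable [DecidableEq (FGSub R M)]

abbrev FGTensorLimit : Type u :=
  Module.DirectLimit (fun i : FGSub R M => i.1 ⊗[R] N)
    (fun i j h => (Module.fgSystem R M i j h).rTensor N)

abbrev HomDualLimit : Type u :=
  Module.DirectLimit (fun i : FGSub R M => Module.Dual R i.1 →ₗ[R] N) (homDualSystem R M N)

noncomputable def evalTensorHomLimit : FGTensorLimit R M N →ₗ[R] HomDualLimit R M N :=
  Module.DirectLimit.map (fun i => evalTensorHom R i.1 N) fun _ _ _ =>
    LinearMap.ext (evalTensorHom_rTensor _)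

variable {R M N} in
@[simp] theorem evalTensorHomLimit_of (i : FGSub R M) (x : i.1 ⊗[R] N) :
    evalTensorHomLimit R M N
        (Module.DirectLimit.of R (FGSub R M) (fun i : FGSub R M => i.1 ⊗[R] N) _ i x) =
      Module.DirectLimit.of R _ _ (homDualSystem R M N) i (evalTensorHom R i.1 N x) :=
  Module.DirectLimit.map_apply_of _ _ _

theorem evalTensorHomLimit_bijective [IsNoetherianRing R] [Module.Flat R M] :
    Function.Bijective (evalTensorHomLimit R M N) :=
  ⟨Module.DirectLimit.map_injective_of _ _ fun _ _ => exists_rTensor_inclusion_eq_zero,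
    Module.DirectLimit.map_surjective_of _ _ exists_evalTensorHom_eq_homDualSystem⟩

variable {N} {N' : Type u} [AddCommGroup N'] [Module R N'] (g : N →ₗ[R] N')

noncomputable def FGTensorLimit.map : FGTensorLimit R M N →ₗ[R] FGTensorLimit R M N' :=
  Module.DirectLimit.map (fun i => g.lTensor i.1) fun _ _ _ => TensorProduct.ext' fun _ _ => rfl

-- Proving the compatibility by a bare `rfl` makes unification choose instance terms under
-- which `Module.DirectLimit.map_apply_of` no longer rewrites.
noncomputable def HomDualLimit.map : HomDualLimit R M N →ₗ[R] HomDualLimit R M N' :=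
  Module.DirectLimit.map (fun _ => LinearMap.compRight R g) fun _ _ _ => LinearMap.ext fun _ => rfl

variable {R M g} in
@[simp] theorem FGTensorLimit.map_of (i : FGSub R M) (x : i.1 ⊗[R] N) :
    FGTensorLimit.map R M g
        (Module.DirectLimit.of R (FGSub R M) (fun i : FGSub R M => i.1 ⊗[R] N) _ i x) =
      Module.DirectLimit.of R (FGSub R M) (fun i : FGSub R M => i.1 ⊗[R] N') _ i
        (g.lTensor i.1 x) :=
  Module.DirectLimit.map_apply_of _ _ _

variable {R M g} in
@[simp] theorem HomDualLimit.map_of (i : FGSub R M) (φ : Module.Dual R i.1 →ₗ[R] N) :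
    HomDualLimit.map R M g (Module.DirectLimit.of R _ _ (homDualSystem R M N) i φ) =
      Module.DirectLimit.of R _ _ (homDualSystem R M N') i (g ∘ₗ φ) :=
  Module.DirectLimit.map_apply_of _ _ _

variable {R M g} in
theorem HomDualLimit.map_injective (hg : Function.Injective g) :
    Function.Injective (HomDualLimit.map R M g) :=
  Module.DirectLimit.map_injective _ _ fun _ _ _ h => LinearMap.ext fun w => hg congr($h w)

theorem evalTensorHomLimit_comp_map :
    evalTensorHomLimit R M N' ∘ₗ FGTensorLimit.map R M g =
      HomDualLimit.map R M g ∘ₗ evalTensorHomLimit R M N :=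
  Module.DirectLimit.hom_ext fun i => LinearMap.ext fun x => by
    simp [evalTensorHom_lTensor]

end

section

variable [DecidableEq (Submodule R M)]

noncomputable def FGTensorLimit.equiv : FGTensorLimit R M N ≃ₗ[R] M ⊗[R] N :=
  (TensorProduct.directLimitLeft _ N).symm ≪≫ₗ (Module.fgSystem.equiv R M).rTensor N

variable {R M N}

theorem FGTensorLimit.equiv_of (i : FGSub R M) (x : i.1 ⊗[R] N) :
    FGTensorLimit.equiv R M N
        (Module.DirectLimit.of R (FGSub R M) (fun i : FGSub R M => i.1 ⊗[R] N) _ i x) =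
      i.1.subtype.rTensor N x := by
  rw [FGTensorLimit.equiv, LinearEquiv.trans_apply, ← TensorProduct.directLimitLeft_rTensor_of,
    LinearEquiv.symm_apply_apply]
  change (Module.fgSystem.equiv R M).toLinearMap.rTensor N _ = _
  rw [← LinearMap.rTensor_comp_apply, Module.fgSystem.equiv_comp_of]

theorem FGTensorLimit.lTensor_comp_equiv {N' : Type u} [AddCommGroup N'] [Module R N']
    (g : N →ₗ[R] N') :
    g.lTensor M ∘ₗ FGTensorLimit.equiv R M N =
      FGTensorLimit.equiv R M N' ∘ₗ FGTensorLimit.map R M g := by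
  refine Module.DirectLimit.hom_ext fun i => LinearMap.ext fun x => ?_
  simp only [LinearMap.comp_apply, LinearEquiv.coe_coe, FGTensorLimit.equiv_of,
    FGTensorLimit.map_of]
  rw [← LinearMap.comp_apply, LinearMap.lTensor_comp_rTensor, ← LinearMap.rTensor_comp_lTensor,
    LinearMap.comp_apply]

theorem evalTensorHomLimit_eq_of_equiv (e : HomDualLimit R M N ≃ₗ[R] M ⊗[R] N)
    (he : ∀ (i : FGSub R M) (m : i.1) (n : N),
      e (Module.DirectLimit.of R _ _ (homDualSystem R M N) i
        ((Module.Dual.eval R i.1 m).smulRight n)) = (m : M) ⊗ₜ[R] n) :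
    evalTensorHomLimit R M N = e.symm.toLinearMap ∘ₗ (FGTensorLimit.equiv R M N).toLinearMap :=
  Module.DirectLimit.hom_ext fun i => TensorProduct.ext' fun m n => by
    simp only [LinearMap.comp_apply, LinearEquiv.coe_coe, evalTensorHomLimit_of,
      FGTensorLimit.equiv_of, LinearMap.rTensor_tmul, Submodule.subtype_apply]
    rw [← he, LinearEquiv.symm_apply_apply, evalTensorHom_tmul]

variable (R M) in
theorem flat_of_evalTensorHomLimit_injective
    (h : ∀ (N : Type u) [AddCommGroup N] [Module R N],
      Function.Injective (evalTensorHomLimit R M N)) :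
    Module.Flat R M := by
  refine Module.Flat.iff_lTensor_preserves_injective_linearMap.mpr fun N N' _ _ _ _ g hg => ?_
  have hmap : Function.Injective (FGTensorLimit.map R M g) := by
    have := (HomDualLimit.map_injective hg).comp (h N)
    rw [← LinearMap.coe_comp, ← evalTensorHomLimit_comp_map, LinearMap.coe_comp] at this
    exact this.of_comp
  have hg' : g.lTensor M = (FGTensorLimit.equiv R M N').toLinearMap ∘ₗ
      FGTensorLimit.map R M g ∘ₗ (FGTensorLimit.equiv R M N).symm.toLinearMap := by
    rw [← LinearMap.comp_assoc, ← FGTensorLimit.lTensor_comp_equiv, LinearMap.comp_assoc,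
      LinearEquiv.comp_coe, LinearEquiv.symm_trans_self, LinearEquiv.refl_toLinearMap,
      LinearMap.comp_id]
  rw [hg']
  exact (FGTensorLimit.equiv R M N').injective.comp
    (hmap.comp (FGTensorLimit.equiv R M N).symm.injective)

end

/-- Over a Noetherian ring, `M` is flat iff for every module `N` the natural map
`colim_i Hom((M i)*, N) → M ⊗ N` (over the finitely generated submodules `M i ⊆ M`, induced
by the natural pairings `m ⊗ n ↦ (w ↦ w m • n)`) is an isomorphism. -/
theorem flat_iff_tensor_eq_colimit_hom_dual
    [IsNoetherianRing R] [DecidableEq (FGSub R M)] :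
    Module.Flat R M ↔
      ∀ (N : Type u) [AddCommGroup N] [Module R N],
        ∃ e : Module.DirectLimit (fun i : FGSub R M => Module.Dual R i.1 →ₗ[R] N)
            (homDualSystem R M N) ≃ₗ[R] M ⊗[R] N,
          ∀ (i : FGSub R M) (m : i.1) (n : N),
            e (Module.DirectLimit.of R (FGSub R M)
                (fun i : FGSub R M => Module.Dual R i.1 →ₗ[R] N)
                (homDualSystem R M N) i
                ((Module.Dual.eval R i.1 m).smulRight n)) = (m : M) ⊗ₜ[R] n := by
  classical
  -- `Module.fgSystem.equiv` is stated for the instance induced by `DecidableEq (Submodule R M)`.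
  obtain rfl : ‹DecidableEq (FGSub R M)› = fun a b => Subtype.instDecidableEq a b :=
    Subsingleton.elim _ _
  refine ⟨fun _ N _ _ => ?_, fun h => flat_of_evalTensorHomLimit_injective R M fun N _ _ => ?_⟩
  · refine ⟨(LinearEquiv.ofBijective _ (evalTensorHomLimit_bijective R M N)).symm ≪≫ₗ
      FGTensorLimit.equiv R M N, fun i m n => ?_⟩
    rw [LinearEquiv.trans_apply, ← evalTensorHom_tmul, ← evalTensorHomLimit_of,
      LinearEquiv.ofBijective_symm_apply_apply, FGTensorLimit.equiv_of]
    rfl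
  · obtain ⟨e, he⟩ := h N
    rw [evalTensorHomLimit_eq_of_equiv e he]
    exact e.symm.injective.comp (FGTensorLimit.equiv R M N).injective

end
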